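/- arXiv:1304.6603 — 5 statements merged into one kernel-verified Lean document; each statement's English description precedes it below -/
import Mathlib

section
/- The P-lifted chain is lumpable with respect to g: for every h, l ∈ 𝒴 and every i ∈ g^{-1}(h), the sum Σ_{j∈g^{-1}(l)} P̂_{ij} equals Q_{hl}, which depends only on h = g(i) and l. -/
open Finset

/-
The P-lifting splits the transition mass `Q (g i) l` of block `l` over the states of that block,
in proportion to `P i ·` when `P` charges the block from `i`, and uniformly otherwise. Either way
the weights sum to one over the block, so the block sum of row `i` of `P̂` is `Q (g i) l`.
-/

lemma Finset.sum_div_sum_mul {ι K : Type*} [Field K] {s : Finset ι} (w : ι → K) (c : K)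
    (hw : ∑ k ∈ s, w k ≠ 0) : ∑ j ∈ s, w j / (∑ k ∈ s, w k) * c = c := by
  rw [← sum_mul, ← sum_div, div_self hw, one_mul]

lemma Finset.sum_const_div_card {ι K : Type*} [Field K] [CharZero K] {s : Finset ι}
    (hs : s.Nonempty) (c : K) : ∑ _j ∈ s, c / #s = c := by
  rw [sum_const, nsmul_eq_mul, mul_div_cancel₀]
  exact_mod_cast hs.card_ne_zero

theorem P_lifting_lumpable_general {𝒳 𝒴 : Type*} [Fintype 𝒳]
    [DecidableEq 𝒴]
    (P : 𝒳 → 𝒳 → ℝ) (g : 𝒳 → 𝒴)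
    (hg : Function.Surjective g)
    (Q : 𝒴 → 𝒴 → ℝ)
    (Phat : 𝒳 → 𝒳 → ℝ)
    -- the P-lifting
    (hPhat : ∀ i j, Phat i j =
      if 0 < ∑ k ∈ univ.filter (fun k => g k = g j), P i k then
        P i j / (∑ k ∈ univ.filter (fun k => g k = g j), P i k) * Q (g i) (g j)
      else
        Q (g i) (g j) / (univ.filter (fun k => g k = g j)).card) :
    ∀ (h l : 𝒴) (i : 𝒳), g i = h →
      ∑ j ∈ univ.filter (fun j => g j = l), Phat i j = Q h l := by
  rintro h l i rfl
  set block := univ.filter (fun j => g j = l)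
  have hblock : ∀ j ∈ block, Phat i j =
      if 0 < ∑ k ∈ block, P i k then P i j / (∑ k ∈ block, P i k) * Q (g i) l
      else Q (g i) l / #block := by
    intro j hj
    rw [hPhat, (mem_filter.mp hj).2]
  rw [sum_congr rfl hblock]
  split_ifs with hpos
  · exact sum_div_sum_mul _ _ hpos.ne'
  · obtain ⟨j, hj⟩ := hg l
    exact sum_const_div_card ⟨j, mem_filter.mpr ⟨mem_univ j, hj⟩⟩ _

/-- The `P`-lifted chain is lumpable w.r.t. `g`: for every `h, l ∈ 𝒴` and every
`i ∈ g⁻¹(h)`, the sum `∑_{j ∈ g⁻¹(l)} P̂_{ij}` equals `Q_{hl}`, depending only on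
`h = g(i)` and `l` (Kemeny–Snell criterion). -/
theorem P_lifting_lumpable {𝒳 𝒴 : Type*} [Fintype 𝒳] [Fintype 𝒴]
    [DecidableEq 𝒴] [Nonempty 𝒳]
    (P : 𝒳 → 𝒳 → ℝ) (μ : 𝒳 → ℝ) (g : 𝒳 → 𝒴)
    (hg : Function.Surjective g)
    (hPnn : ∀ i j, 0 ≤ P i j) (hProw : ∀ i, ∑ j, P i j = 1)
    (hμpos : ∀ i, 0 < μ i) (hμsum : ∑ i, μ i = 1)
    (hμinv : ∀ j, ∑ i, μ i * P i j = μ j)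
    (ν : 𝒴 → ℝ)
    (hν : ∀ k, ν k = ∑ i ∈ univ.filter (fun i => g i = k), μ i)
    (Q : 𝒴 → 𝒴 → ℝ)
    (hQ : ∀ k l, Q k l =
      (∑ i ∈ univ.filter (fun i => g i = k),
        ∑ j ∈ univ.filter (fun j => g j = l), μ i * P i j) / ν k)
    (Phat : 𝒳 → 𝒳 → ℝ)
    -- the P-lifting
    (hPhat : ∀ i j, Phat i j =
      if 0 < ∑ k ∈ univ.filter (fun k => g k = g j), P i k then
        P i j / (∑ k ∈ univ.filter (fun k => g k = g j), P i k) * Q (g i) (g j)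
      else
        Q (g i) (g j) / (univ.filter (fun k => g k = g j)).card) :
    ∀ (h l : 𝒴) (i : 𝒳), g i = h →
      ∑ j ∈ univ.filter (fun j => g j = l), Phat i j = Q h l :=
  P_lifting_lumpable_general P g hg Q Phat hPhat
end

section
/- If X is lumpable with respect to g (in the Kemeny-Snell sense that Σ_{j∈g^{-1}(l)} P_{ij} = Q_{g(i)l} for all i and l), then the P-lifting equals the original transition matrix: P̂ = P, and consequently the KL divergence rate D̄(X || X'^P) = Σ_{i,j} μ_i P_{ij} log(P_{ij}/P̂_{ij}) equals zero. -/
open Finset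

/-- The `P`-lifting entry once lumpability has replaced `Q (g i) (g j)` by the mass of row `i`
on the block `s` of `j`. -/
theorem ite_div_sum_mul_sum_eq_of_nonneg {ι : Type*} {s : Finset ι} {p : ι → ℝ}
    (hp : ∀ k ∈ s, 0 ≤ p k) {j : ι} (hj : j ∈ s) (c : ℝ) :
    (if 0 < ∑ k ∈ s, p k then p j / (∑ k ∈ s, p k) * ∑ k ∈ s, p k
      else (∑ k ∈ s, p k) / c) = p j := by
  split_ifs with hpos
  · exact div_mul_cancel₀ _ hpos.ne'
  · have hsum : ∑ k ∈ s, p k = 0 := le_antisymm (not_lt.mp hpos) (sum_nonneg hp)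
    rw [hsum, zero_div, ((sum_eq_zero_iff_of_nonneg hp).mp hsum j hj).symm]

theorem P_lifting_of_lumpable_eq_general {𝒳 𝒴 : Type*} [Fintype 𝒳]
    [DecidableEq 𝒴]
    (P : 𝒳 → 𝒳 → ℝ) (μ : 𝒳 → ℝ) (g : 𝒳 → 𝒴)
    (hPnn : ∀ i j, 0 ≤ P i j)
    (Q : 𝒴 → 𝒴 → ℝ)
    (Phat : 𝒳 → 𝒳 → ℝ)
    -- the P-lifting
    (hPhat : ∀ i j, Phat i j =
      if 0 < ∑ k ∈ univ.filter (fun k => g k = g j), P i k then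
        P i j / (∑ k ∈ univ.filter (fun k => g k = g j), P i k) * Q (g i) (g j)
      else
        Q (g i) (g j) / (univ.filter (fun k => g k = g j)).card)
    -- lumpability hypothesis
    (hlump : ∀ (i : 𝒳) (l : 𝒴), ∑ j ∈ univ.filter (fun j => g j = l), P i j = Q (g i) l) :
    (∀ i j, Phat i j = P i j) ∧
    (∑ i, ∑ j, μ i * P i j * Real.log (P i j / Phat i j)) = 0 := by
  have hPhat_eq : ∀ i j, Phat i j = P i j := fun i j => by
    rw [hPhat, ← hlump]
    exact ite_div_sum_mul_sum_eq_of_nonneg (fun k _ => hPnn i k) (by simp) _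
  exact ⟨hPhat_eq, by simp [hPhat_eq]⟩

/-- If `X` is lumpable w.r.t. `g` (Kemeny–Snell: `∑_{j∈g⁻¹(l)} P_{ij} = Q_{g(i) l}`
for all `i, l`), then the `P`-lifting equals the original transition matrix, `P̂ = P`,
and consequently the KL divergence rate `∑_{i,j} μ_i P_{ij} log(P_{ij}/P̂_{ij})` is zero. -/
theorem P_lifting_of_lumpable_eq {𝒳 𝒴 : Type*} [Fintype 𝒳] [Fintype 𝒴]
    [DecidableEq 𝒴] [Nonempty 𝒳]
    (P : 𝒳 → 𝒳 → ℝ) (μ : 𝒳 → ℝ) (g : 𝒳 → 𝒴)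
    (hg : Function.Surjective g)
    (hPnn : ∀ i j, 0 ≤ P i j) (hProw : ∀ i, ∑ j, P i j = 1)
    (hμpos : ∀ i, 0 < μ i) (hμsum : ∑ i, μ i = 1)
    (hμinv : ∀ j, ∑ i, μ i * P i j = μ j)
    (ν : 𝒴 → ℝ)
    (hν : ∀ k, ν k = ∑ i ∈ univ.filter (fun i => g i = k), μ i)
    (Q : 𝒴 → 𝒴 → ℝ)
    (hQ : ∀ k l, Q k l =
      (∑ i ∈ univ.filter (fun i => g i = k),
        ∑ j ∈ univ.filter (fun j => g j = l), μ i * P i j) / ν k)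
    (Phat : 𝒳 → 𝒳 → ℝ)
    -- the P-lifting
    (hPhat : ∀ i j, Phat i j =
      if 0 < ∑ k ∈ univ.filter (fun k => g k = g j), P i k then
        P i j / (∑ k ∈ univ.filter (fun k => g k = g j), P i k) * Q (g i) (g j)
      else
        Q (g i) (g j) / (univ.filter (fun k => g k = g j)).card)
    -- lumpability hypothesis
    (hlump : ∀ (i : 𝒳) (l : 𝒴), ∑ j ∈ univ.filter (fun j => g j = l), P i j = Q (g i) l) :
    (∀ i j, Phat i j = P i j) ∧
    (∑ i, ∑ j, μ i * P i j * Real.log (P i j / Phat i j)) = 0 :=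
  P_lifting_of_lumpable_eq_general P μ g hPnn Q Phat hPhat hlump
end

section
/- The KL divergence rate of X from its P-lifting is at most that from its μ-lifting: Σ_{i,j} μ_i P_{ij} log(P_{ij}/P̂_{ij}) ≤ Σ_{i,j} μ_i P_{ij} log(P_{ij}/P'_{ij}), where P̂ is the P-lifting and P' = V Q U^μ the μ-lifting; the difference equals I(X_n; X_{n-1}) − I(Y_n; X_{n-1}) ≥ 0. -/
/-!
Where `P i j > 0`, both liftings carry the factor `Q (g i) (g j)`, so
`log (P̂ i j / P' i j) = log (P i j / μ j) - log (R i (g j) / ν (g j))`. Averaging against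
`μ i * P i j` and grouping `j` by its fibre under `g` turns this into the difference of the
two mutual informations. That difference is nonnegative because merging the states of a fibre
cannot increase a relative entropy: this is the log-sum inequality, i.e. Jensen's inequality
for `x ↦ x log x`.
-/

open Finset Real

theorem sum_mul_log_sum_div_sum_le {ι : Type*} (s : Finset ι) (a b : ι → ℝ)
    (ha : ∀ i ∈ s, 0 ≤ a i) (hb : ∀ i ∈ s, 0 < b i) :
    (∑ i ∈ s, a i) * log ((∑ i ∈ s, a i) / ∑ i ∈ s, b i)
      ≤ ∑ i ∈ s, a i * log (a i / b i) := by
  rcases s.eq_empty_or_nonempty with rfl | hs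
  · simp
  set B := ∑ i ∈ s, b i
  have hB : 0 < B := sum_pos hb hs
  have jensen := convexOn_mul_log.map_sum_le (t := s) (w := fun i => b i / B)
    (p := fun i => a i / b i) (fun i hi => (div_pos (hb i hi) hB).le)
    (by rw [← sum_div, div_self hB.ne'])
    (fun i hi => Set.mem_Ici.2 (div_nonneg (ha i hi) (hb i hi).le))
  have hmean : ∑ i ∈ s, b i / B * (a i / b i) = (∑ i ∈ s, a i) / B := by
    rw [sum_div]
    exact sum_congr rfl fun i hi => by field_simp [(hb i hi).ne']
  have hrhs : ∑ i ∈ s, b i / B * (a i / b i * log (a i / b i))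
      = (∑ i ∈ s, a i * log (a i / b i)) / B := by
    rw [sum_div]
    exact sum_congr rfl fun i hi => by field_simp [(hb i hi).ne']
  simp only [smul_eq_mul, hmean, hrhs] at jensen
  calc (∑ i ∈ s, a i) * log ((∑ i ∈ s, a i) / B)
      = B * ((∑ i ∈ s, a i) / B * log ((∑ i ∈ s, a i) / B)) := by
        field_simp
    _ ≤ B * ((∑ i ∈ s, a i * log (a i / b i)) / B) := by gcongr
    _ = ∑ i ∈ s, a i * log (a i / b i) := by field_simp

section Fibers

variable {α β : Type*} [Fintype α] [DecidableEq β]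

theorem single_le_sum_fiber {f : α → ℝ} (hf : ∀ j, 0 ≤ f j) (g : α → β) (i : α) :
    f i ≤ ∑ j ∈ univ.filter (fun j => g j = g i), f j :=
  single_le_sum (fun j _ => hf j) (mem_filter.2 ⟨mem_univ i, rfl⟩)

theorem single_le_sum_fiber_sum_fiber {w : α → α → ℝ} (hw : ∀ i j, 0 ≤ w i j) (g : α → β)
    (i j : α) :
    w i j ≤ ∑ i' ∈ univ.filter (fun i' => g i' = g i),
      ∑ j' ∈ univ.filter (fun j' => g j' = g j), w i' j' :=
  (single_le_sum_fiber (hw i) g j).trans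
    (single_le_sum_fiber (fun i' => sum_nonneg fun j' _ => hw i' j') g i)

theorem sum_mul_comp_eq_sum_fiber [Fintype β] (g : α → β) (f : α → ℝ) (h : β → ℝ) :
    ∑ j, f j * h (g j) = ∑ l, (∑ j ∈ univ.filter (fun j => g j = l), f j) * h l := by
  rw [← sum_fiberwise univ g]
  refine sum_congr rfl fun l _ => ?_
  rw [sum_mul]
  exact sum_congr rfl fun j hj => by rw [(mem_filter.1 hj).2]

theorem sum_fiber_mul_log_div_le [Fintype β] (g : α → β) {a b : α → ℝ}
    (ha : ∀ j, 0 ≤ a j) (hb : ∀ j, 0 < b j) :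
    ∑ l, (∑ j ∈ univ.filter (fun j => g j = l), a j) *
        log ((∑ j ∈ univ.filter (fun j => g j = l), a j) /
          ∑ j ∈ univ.filter (fun j => g j = l), b j)
      ≤ ∑ j, a j * log (a j / b j) := by
  rw [← sum_fiberwise univ g]
  exact sum_le_sum fun l _ =>
    sum_mul_log_sum_div_sum_le _ a b (fun j _ => ha j) (fun j _ => hb j)

end Fibers

theorem log_div_mul_sub_log_div_mul {p m n r q : ℝ} (hp : 0 < p) (hm : 0 < m) (hn : 0 < n)
    (hr : 0 < r) (hq : 0 < q) :
    log (p / (m / n * q)) - log (p / (p / r * q)) = log (p / m) - log (r / n) := by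
  rw [← log_div (by positivity) (by positivity), ← log_div (by positivity) (by positivity)]
  congr 1
  field_simp

theorem kldr_P_lifting_le_mu_lifting_general {𝒳 𝒴 : Type*} [Fintype 𝒳] [Fintype 𝒴]
    [DecidableEq 𝒴]
    (P : 𝒳 → 𝒳 → ℝ) (μ : 𝒳 → ℝ) (g : 𝒳 → 𝒴)
    (hPnn : ∀ i j, 0 ≤ P i j)
    (hμpos : ∀ i, 0 < μ i)
    (R : 𝒳 → 𝒴 → ℝ)
    (hR : ∀ i l, R i l = ∑ j ∈ univ.filter (fun j => g j = l), P i j)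
    (ν : 𝒴 → ℝ)
    (hν : ∀ k, ν k = ∑ i ∈ univ.filter (fun i => g i = k), μ i)
    (Q : 𝒴 → 𝒴 → ℝ)
    (hQ : ∀ k l, Q k l =
      (∑ i ∈ univ.filter (fun i => g i = k),
        ∑ j ∈ univ.filter (fun j => g j = l), μ i * P i j) / ν k)
    -- μ-lifting
    (P' : 𝒳 → 𝒳 → ℝ)
    (hP' : ∀ i j, P' i j =
      (μ j / ∑ k ∈ univ.filter (fun k => g k = g j), μ k) * Q (g i) (g j))
    -- P-lifting
    (Phat : 𝒳 → 𝒳 → ℝ)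
    (hPhat : ∀ i j, Phat i j =
      if 0 < R i (g j) then P i j / R i (g j) * Q (g i) (g j)
      else Q (g i) (g j) / (univ.filter (fun k => g k = g j)).card) :
    ((∑ i, ∑ j, μ i * P i j * Real.log (P i j / P' i j))
        - (∑ i, ∑ j, μ i * P i j * Real.log (P i j / Phat i j))
      = (∑ i, ∑ j, μ i * P i j * Real.log (P i j / μ j))
        - (∑ i, ∑ l, μ i * R i l * Real.log (R i l / ν l))) ∧
    (0 ≤ (∑ i, ∑ j, μ i * P i j * Real.log (P i j / μ j))
        - (∑ i, ∑ l, μ i * R i l * Real.log (R i l / ν l))) ∧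
    (∑ i, ∑ j, μ i * P i j * Real.log (P i j / Phat i j)
      ≤ ∑ i, ∑ j, μ i * P i j * Real.log (P i j / P' i j)) := by
  have hν_pos : ∀ i, 0 < ν (g i) := fun i =>
    (hμpos i).trans_le ((hν _).symm ▸ single_le_sum_fiber (fun j => (hμpos j).le) g i)
  have term : ∀ i j, μ i * P i j * log (P i j / P' i j) - μ i * P i j * log (P i j / Phat i j)
      = μ i * P i j * log (P i j / μ j) - μ i * P i j * log (R i (g j) / ν (g j)) := by
    intro i j
    rcases (hPnn i j).eq_or_lt with hzero | hpos
    · simp [← hzero]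
    have hR_pos : 0 < R i (g j) :=
      hpos.trans_le ((hR _ _).symm ▸ single_le_sum_fiber (hPnn i) g j)
    have hQ_pos : 0 < Q (g i) (g j) := hQ _ _ ▸ div_pos ((mul_pos (hμpos i) hpos).trans_le
      (single_le_sum_fiber_sum_fiber (fun i' j' => mul_nonneg (hμpos i').le (hPnn i' j')) g i j))
      (hν_pos i)
    rw [hP', hPhat, if_pos hR_pos, ← hν, ← mul_sub, ← mul_sub,
      log_div_mul_sub_log_div_mul hpos (hμpos j) (hν_pos j) hR_pos hQ_pos]
  have coarse : ∀ i, ∑ j, μ i * P i j * log (R i (g j) / ν (g j))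
      = ∑ l, μ i * R i l * log (R i l / ν l) := fun i => by
    rw [sum_mul_comp_eq_sum_fiber g (fun j => μ i * P i j) (fun l => log (R i l / ν l))]
    simp only [← mul_sum, ← hR]
  have identity : (∑ i, ∑ j, μ i * P i j * log (P i j / P' i j))
        - (∑ i, ∑ j, μ i * P i j * log (P i j / Phat i j))
      = (∑ i, ∑ j, μ i * P i j * log (P i j / μ j))
        - (∑ i, ∑ l, μ i * R i l * log (R i l / ν l)) := by
    simp only [← coarse, ← sum_sub_distrib, term]
  have coarse_le : ∀ i, ∑ l, μ i * R i l * log (R i l / ν l)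
      ≤ ∑ j, μ i * P i j * log (P i j / μ j) := fun i => by
    simp only [mul_assoc, ← mul_sum, hR, hν]
    exact mul_le_mul_of_nonneg_left
      (sum_fiber_mul_log_div_le g (hPnn i) hμpos) (hμpos i).le
  have nonneg := sub_nonneg.2 (sum_le_sum fun i (_ : i ∈ univ) => coarse_le i)
  exact ⟨identity, nonneg, by linarith⟩

/-- The KL divergence rate of `X` from its `P`-lifting is at most that from its
`μ`-lifting, the difference being `I(X_n; X_{n-1}) − I(Y_n; X_{n-1}) ≥ 0`. -/
theorem kldr_P_lifting_le_mu_lifting {𝒳 𝒴 : Type*} [Fintype 𝒳] [Fintype 𝒴]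
    [DecidableEq 𝒴] [Nonempty 𝒳]
    (P : 𝒳 → 𝒳 → ℝ) (μ : 𝒳 → ℝ) (g : 𝒳 → 𝒴)
    (hg : Function.Surjective g)
    (hPnn : ∀ i j, 0 ≤ P i j) (hProw : ∀ i, ∑ j, P i j = 1)
    (hμpos : ∀ i, 0 < μ i) (hμsum : ∑ i, μ i = 1)
    (hμinv : ∀ j, ∑ i, μ i * P i j = μ j)
    (R : 𝒳 → 𝒴 → ℝ)
    (hR : ∀ i l, R i l = ∑ j ∈ univ.filter (fun j => g j = l), P i j)
    (ν : 𝒴 → ℝ)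
    (hν : ∀ k, ν k = ∑ i ∈ univ.filter (fun i => g i = k), μ i)
    (Q : 𝒴 → 𝒴 → ℝ)
    (hQ : ∀ k l, Q k l =
      (∑ i ∈ univ.filter (fun i => g i = k),
        ∑ j ∈ univ.filter (fun j => g j = l), μ i * P i j) / ν k)
    -- μ-lifting
    (P' : 𝒳 → 𝒳 → ℝ)
    (hP' : ∀ i j, P' i j =
      (μ j / ∑ k ∈ univ.filter (fun k => g k = g j), μ k) * Q (g i) (g j))
    -- P-lifting
    (Phat : 𝒳 → 𝒳 → ℝ)
    (hPhat : ∀ i j, Phat i j =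
      if 0 < R i (g j) then P i j / R i (g j) * Q (g i) (g j)
      else Q (g i) (g j) / (univ.filter (fun k => g k = g j)).card) :
    ((∑ i, ∑ j, μ i * P i j * Real.log (P i j / P' i j))
        - (∑ i, ∑ j, μ i * P i j * Real.log (P i j / Phat i j))
      = (∑ i, ∑ j, μ i * P i j * Real.log (P i j / μ j))
        - (∑ i, ∑ l, μ i * R i l * Real.log (R i l / ν l))) ∧
    (0 ≤ (∑ i, ∑ j, μ i * P i j * Real.log (P i j / μ j))
        - (∑ i, ∑ l, μ i * R i l * Real.log (R i l / ν l))) ∧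
    (∑ i, ∑ j, μ i * P i j * Real.log (P i j / Phat i j)
      ≤ ∑ i, ∑ j, μ i * P i j * Real.log (P i j / P' i j)) :=
  kldr_P_lifting_le_mu_lifting_general P μ g hPnn hμpos R hR ν hν Q hQ P' hP' Phat hPhat
end

section
/- Among all liftings P̃ of Q of the form P̃_{ij} = b_{ij} Q_{g(i)g(j)} with Σ_{j∈g^{-1}(l)} b_{ij} = 1 for all i ∈ 𝒳, l ∈ 𝒴, the choice b_{ij} = P_{ij}/Σ_{k∈g^{-1}(g(j))} P_{ik} (wherever the denominator is positive) minimizes the KL divergence rate Σ_{i,j} μ_i P_{ij} log(P_{ij}/P̃_{ij}). -/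
open Finset

lemma gibbs_term (p q : ℝ) (hp : 0 < p) (hq : 0 < q) :
    p - q ≤ p * Real.log (p / q) := by
  have h := Real.log_le_sub_one_of_pos (show 0 < q / p by positivity)
  have hlog : Real.log (p / q) = - Real.log (q / p) := by
    rw [← Real.log_inv]; congr 1; field_simp
  have h2 := mul_le_mul_of_nonneg_left h hp.le
  have h3 : p * (q / p - 1) = q - p := by field_simp
  rw [hlog]; nlinarith [h2, h3]


open Finset

/-- Among all liftings `P̃_{ij} = b_{ij} Q_{g(i)g(j)}` of `Q` (with `b` nonnegative and
summing to one on each block `g⁻¹(l)`, and `P ≪ P̃` for the KL divergence rate to be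
defined), the choice `b_{ij} = P_{ij} / ∑_{k∈g⁻¹(g(j))} P_{ik}` — i.e. the `P`-lifting —
minimizes the KL divergence rate `∑_{i,j} μ_i P_{ij} log(P_{ij}/P̃_{ij})`. -/
theorem P_lifting_minimizes_kldr {𝒳 𝒴 : Type*} [Fintype 𝒳] [Fintype 𝒴]
    [DecidableEq 𝒴] [Nonempty 𝒳]
    (P : 𝒳 → 𝒳 → ℝ) (μ : 𝒳 → ℝ) (g : 𝒳 → 𝒴)
    (hg : Function.Surjective g)
    (hPnn : ∀ i j, 0 ≤ P i j) (hProw : ∀ i, ∑ j, P i j = 1)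
    (hμpos : ∀ i, 0 < μ i) (hμsum : ∑ i, μ i = 1)
    (hμinv : ∀ j, ∑ i, μ i * P i j = μ j)
    (R : 𝒳 → 𝒴 → ℝ)
    (hR : ∀ i l, R i l = ∑ j ∈ univ.filter (fun j => g j = l), P i j)
    (ν : 𝒴 → ℝ)
    (hν : ∀ k, ν k = ∑ i ∈ univ.filter (fun i => g i = k), μ i)
    (Q : 𝒴 → 𝒴 → ℝ)
    (hQ : ∀ k l, Q k l =
      (∑ i ∈ univ.filter (fun i => g i = k),
        ∑ j ∈ univ.filter (fun j => g j = l), μ i * P i j) / ν k)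
    -- the P-lifting
    (Phat : 𝒳 → 𝒳 → ℝ)
    (hPhat : ∀ i j, Phat i j =
      if 0 < R i (g j) then P i j / R i (g j) * Q (g i) (g j)
      else Q (g i) (g j) / (univ.filter (fun k => g k = g j)).card) :
    -- any other lifting P̃_{ij} = b_{ij} Q_{g(i)g(j)} has at least as large a KLDR
    ∀ (b : 𝒳 → 𝒳 → ℝ), (∀ i j, 0 ≤ b i j) →
      (∀ (i : 𝒳) (l : 𝒴), ∑ j ∈ univ.filter (fun j => g j = l), b i j = 1) →
      ∀ (Ptilde : 𝒳 → 𝒳 → ℝ), (∀ i j, Ptilde i j = b i j * Q (g i) (g j)) →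
      (∀ i j, Ptilde i j = 0 → P i j = 0) →
      ∑ i, ∑ j, μ i * P i j * Real.log (P i j / Phat i j)
        ≤ ∑ i, ∑ j, μ i * P i j * Real.log (P i j / Ptilde i j) := by
  intro b hb hbsum Ptilde hPt hPt0
  -- basic positivity facts
  have hQnn : ∀ k l, 0 ≤ Q k l := by
    intro k l
    rw [hQ]
    apply div_nonneg
    · exact Finset.sum_nonneg fun i _ => Finset.sum_nonneg fun j _ =>
        mul_nonneg (hμpos i).le (hPnn i j)
    · rw [hν]
      exact Finset.sum_nonneg fun i _ => (hμpos i).le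
  have hRnn : ∀ i l, 0 ≤ R i l := by
    intro i l
    rw [hR]
    exact Finset.sum_nonneg fun j _ => hPnn i j
  have hRge : ∀ i j, P i j ≤ R i (g j) := by
    intro i j
    rw [hR]
    exact Finset.single_le_sum (f := fun j' => P i j')
      (fun j' _ => hPnn i j') (by simp)
  -- termwise inequality
  have key : ∀ i j,
      μ i * P i j * Real.log (P i j / Phat i j) + μ i * (P i j - b i j * R i (g j))
        ≤ μ i * P i j * Real.log (P i j / Ptilde i j) := by
    intro i j
    rcases eq_or_lt_of_le (hPnn i j) with hP0 | hPpos
    · rw [← hP0]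
      simp only [mul_zero, zero_mul, zero_sub, mul_neg, zero_add]
      have : 0 ≤ μ i * (b i j * R i (g j)) :=
        mul_nonneg (hμpos i).le (mul_nonneg (hb i j) (hRnn i (g j)))
      linarith
    · -- P i j > 0
      have hRpos : 0 < R i (g j) := lt_of_lt_of_le hPpos (hRge i j)
      have hPtpos : 0 < Ptilde i j := by
        rcases eq_or_lt_of_le (show 0 ≤ Ptilde i j by
          rw [hPt]; exact mul_nonneg (hb i j) (hQnn _ _)) with h | h
        · exact absurd (hPt0 i j h.symm) (ne_of_gt hPpos)
        · exact h
      have hbpos : 0 < b i j := by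
        by_contra h
        push_neg at h
        have : b i j = 0 := le_antisymm h (hb i j)
        rw [hPt, this, zero_mul] at hPtpos
        exact lt_irrefl 0 hPtpos
      have hQpos : 0 < Q (g i) (g j) := by
        by_contra h
        push_neg at h
        have : Q (g i) (g j) = 0 := le_antisymm h (hQnn _ _)
        rw [hPt, this, mul_zero] at hPtpos
        exact lt_irrefl 0 hPtpos
      have hPhatval : Phat i j = P i j / R i (g j) * Q (g i) (g j) := by
        rw [hPhat]; rw [if_pos hRpos]
      have hPhatpos : 0 < Phat i j := by
        rw [hPhatval]; positivity
      -- log(P/Ptilde) = log(P/Phat) + log(P/(b*R))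
      have hsplit : P i j / Ptilde i j = (P i j / Phat i j) * (P i j / (b i j * R i (g j))) := by
        rw [hPhatval, hPt]
        field_simp
      have hlog : Real.log (P i j / Ptilde i j)
          = Real.log (P i j / Phat i j) + Real.log (P i j / (b i j * R i (g j))) := by
        rw [hsplit, Real.log_mul (by positivity) (by positivity)]
      rw [hlog, mul_add]
      have hbR : 0 < b i j * R i (g j) := by positivity
      have hgibbs := gibbs_term (P i j) (b i j * R i (g j)) hPpos hbR
      have := mul_le_mul_of_nonneg_left hgibbs (hμpos i).le
      nlinarith [this]
  -- the correction term sums to zero for each i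
  have hzero : ∀ i, ∑ j, μ i * (P i j - b i j * R i (g j)) = 0 := by
    intro i
    have h1 : ∑ j, b i j * R i (g j) = 1 := by
      have hfib : ∑ l, ∑ j ∈ univ.filter (fun j => g j = l), b i j * R i (g j)
          = ∑ j, b i j * R i (g j) := Finset.sum_fiberwise univ g _
      rw [← hfib]
      have : ∀ l, ∑ j ∈ univ.filter (fun j => g j = l), b i j * R i (g j) = R i l := by
        intro l
        have : ∑ j ∈ univ.filter (fun j => g j = l), b i j * R i (g j)
            = ∑ j ∈ univ.filter (fun j => g j = l), b i j * R i l := by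
          apply Finset.sum_congr rfl
          intro j hj
          rw [Finset.mem_filter] at hj
          rw [hj.2]
        rw [this, ← Finset.sum_mul, hbsum i l, one_mul]
      simp_rw [this]
      have hfib2 : ∑ l, ∑ j ∈ univ.filter (fun j => g j = l), P i j = ∑ j, P i j :=
        Finset.sum_fiberwise univ g _
      calc ∑ l, R i l = ∑ l, ∑ j ∈ univ.filter (fun j => g j = l), P i j := by
            apply Finset.sum_congr rfl; intro l _; rw [hR]
        _ = 1 := by rw [hfib2, hProw]
    simp_rw [mul_sub, Finset.sum_sub_distrib, ← Finset.mul_sum, hProw i, h1]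
    ring
  calc ∑ i, ∑ j, μ i * P i j * Real.log (P i j / Phat i j)
      = ∑ i, ∑ j, (μ i * P i j * Real.log (P i j / Phat i j)
          + μ i * (P i j - b i j * R i (g j))) := by
        apply Finset.sum_congr rfl
        intro i _
        rw [Finset.sum_add_distrib, hzero i, add_zero]
    _ ≤ ∑ i, ∑ j, μ i * P i j * Real.log (P i j / Ptilde i j) :=
        Finset.sum_le_sum fun i _ => Finset.sum_le_sum fun j _ => key i j
end

section
/- The IB upper bound: L_{X_n}(X_{n-1} → Y_{n-1}) = I(X_n;X_{n-1}) − I(X_n;Y_{n-1}) is bounded above by the redundancy-rate difference R̄(X) − R̄(Y') = D̄(X || X'^μ), where Y' is the optimal aggregation and X'^μ the μ-lifting; concretely, H(X_n|Y_{n-1}) − H(X_n|X_{n-1}) ≤ H(X) − H(Y') + H̄(Y') − H̄(X). -/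
/-!
Write `p k j` for the stationary probability that `Y_{n-1} = k` and `X_n = j`. Expanding the
logarithms of `S = p / ν` and `Q`, the `log ν_{Y_{n-1}}` terms cancel and the inequality becomes
`H(Y_{n-1} | X_n) ≤ H(Y_{n-1} | Y_n)`: conditioning on the function `Y_n = g X_n` of `X_n`
instead of `X_n` itself can only increase entropy. That in turn is the log-sum inequality
applied on each fibre of `g`.
-/

open Finset Real

lemma mul_log_div_of_eq_zero_imp {x y : ℝ} (h : y = 0 → x = 0) :
    x * log (x / y) = x * log x - x * log y := by
  rcases eq_or_ne x 0 with rfl | hx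
  · simp
  · rw [log_div hx (mt h hx)]
    ring

/-- The log-sum inequality. -/
theorem sum_mul_log_div_sum_le {ι : Type*} (s : Finset ι) {a b : ι → ℝ}
    (ha : ∀ i ∈ s, 0 ≤ a i) (hb : ∀ i ∈ s, 0 < b i) :
    (∑ i ∈ s, a i) * log ((∑ i ∈ s, a i) / ∑ i ∈ s, b i) ≤ ∑ i ∈ s, a i * log (a i / b i) := by
  rcases s.eq_empty_or_nonempty with rfl | hs
  · simp
  set B := ∑ i ∈ s, b i
  have hB : 0 < B := sum_pos hb hs
  -- Jensen for `x ↦ x log x` with weights `b i / B` at the points `a i / b i`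
  have jensen := convexOn_mul_log.map_sum_le (t := s) (w := fun i => b i / B)
    (p := fun i => a i / b i) (fun i hi => (div_pos (hb i hi) hB).le)
    (by rw [← sum_div, div_self hB.ne'])
    (fun i hi => Set.mem_Ici.2 (div_nonneg (ha i hi) (hb i hi).le))
  have hweight : ∀ i ∈ s, b i / B * (a i / b i) = a i / B := fun i hi => by
    field_simp [(hb i hi).ne']
  have hmean : ∑ i ∈ s, (b i / B) • (a i / b i) = (∑ i ∈ s, a i) / B := by
    rw [sum_div]
    exact sum_congr rfl fun i hi => by rw [smul_eq_mul, hweight i hi]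
  have hvalues : ∑ i ∈ s, (b i / B) • (a i / b i * log (a i / b i))
      = (∑ i ∈ s, a i * log (a i / b i)) / B := by
    rw [sum_div]
    exact sum_congr rfl fun i hi => by
      rw [smul_eq_mul, ← mul_assoc, hweight i hi, div_mul_eq_mul_div]
  rw [hmean, hvalues, div_mul_eq_mul_div, div_le_div_iff_of_pos_right hB] at jensen
  exact jensen

section FiberSum

variable {β γ : Type*} [Fintype β] [DecidableEq γ]

def fiberSum (f : β → γ) (u : β → ℝ) (l : γ) : ℝ :=
  ∑ j ∈ univ.filter (fun j => f j = l), u j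

lemma fiberSum_nonneg (f : β → γ) {u : β → ℝ} (hu : ∀ j, 0 ≤ u j) (l : γ) :
    0 ≤ fiberSum f u l :=
  sum_nonneg fun j _ => hu j

lemma sum_fiberSum [Fintype γ] (f : β → γ) (u : β → ℝ) :
    ∑ l, fiberSum f u l = ∑ j, u j :=
  sum_fiberwise univ f u

lemma fiberSum_mul_eq_zero (f : β → γ) {w : β → ℝ} (hw : ∀ j, 0 ≤ w j) {l : γ}
    (h : fiberSum f w l = 0) (c : β → ℝ) : fiberSum f (fun j => w j * c j) l = 0 := by
  have hzero := (sum_eq_zero_iff_of_nonneg fun j _ => hw j).1 h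
  exact sum_eq_zero fun j hj => by rw [hzero j hj, zero_mul]

end FiberSum

section CondEntropy

variable {α β γ : Type*} [Fintype α] [Fintype β]

/-- The conditional entropy `H(K | J)` of a joint law `p k j` of `(K, J)`. -/
noncomputable def condEntropy (p : α → β → ℝ) : ℝ :=
  ∑ j, (∑ k, p k j) * log (∑ k, p k j) - ∑ k, ∑ j, p k j * log (p k j)

lemma condEntropy_eq_neg_sum {p : α → β → ℝ} (hp : ∀ k j, 0 ≤ p k j) :
    condEntropy p = -∑ k, ∑ j, p k j * log (p k j / ∑ k', p k' j) := by
  have hsplit : ∀ k j, p k j * log (p k j / ∑ k', p k' j)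
      = p k j * log (p k j) - p k j * log (∑ k', p k' j) := fun k j =>
    mul_log_div_of_eq_zero_imp fun h0 =>
      le_antisymm (h0 ▸ single_le_sum (fun k' _ => hp k' j) (mem_univ k)) (hp k j)
  simp only [hsplit, sum_sub_distrib, condEntropy, sum_comm (γ := α), ← sum_mul]
  ring

theorem condEntropy_le_condEntropy_fiberSum [Fintype γ] [DecidableEq γ] (f : β → γ)
    {p : α → β → ℝ} (hp : ∀ k j, 0 ≤ p k j) (hcol : ∀ j, 0 < ∑ k, p k j) :
    condEntropy p ≤ condEntropy fun k => fiberSum f (p k) := by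
  have hcol_fiberSum : ∀ l, ∑ k, fiberSum f (p k) l = fiberSum f (fun j => ∑ k, p k j) l :=
    fun l => sum_comm
  rw [condEntropy_eq_neg_sum hp,
    condEntropy_eq_neg_sum fun k => fiberSum_nonneg f (hp k), neg_le_neg_iff]
  simp only [hcol_fiberSum]
  refine sum_le_sum fun k _ => ?_
  rw [← sum_fiberwise univ f]
  exact sum_le_sum fun l _ =>
    sum_mul_log_div_sum_le _ (fun j _ => hp k j) (fun j _ => hcol j)

end CondEntropy

lemma sum_mul_div_mul_log_div {β : Type*} [Fintype β] (u : β → ℝ) {n : ℝ}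
    (hn : n = 0 → ∀ j, u j = 0) :
    ∑ j, n * (u j / n) * log (u j / n) = ∑ j, u j * log (u j) - (∑ j, u j) * log n := by
  rcases eq_or_ne n 0 with h | h
  · simp [h, hn h]
  · simp only [mul_div_cancel₀ _ h, mul_log_div_of_eq_zero_imp fun h' => absurd h' h,
      sum_sub_distrib, sum_mul]

section Joint

variable {𝒳 𝒴 : Type*} [Fintype 𝒳] [DecidableEq 𝒴]

/-- `joint P μ g k j` is the probability that `Y_{n-1} = k` and `X_n = j`. -/
def joint (P : 𝒳 → 𝒳 → ℝ) (μ : 𝒳 → ℝ) (g : 𝒳 → 𝒴) (k : 𝒴) (j : 𝒳) : ℝ :=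
  fiberSum g (fun i => μ i * P i j) k

variable {P : 𝒳 → 𝒳 → ℝ} {μ : 𝒳 → ℝ} (g : 𝒳 → 𝒴)

lemma joint_nonneg (hP : ∀ i j, 0 ≤ P i j) (hμ : ∀ i, 0 ≤ μ i) (k : 𝒴) (j : 𝒳) :
    0 ≤ joint P μ g k j :=
  fiberSum_nonneg g (fun i => mul_nonneg (hμ i) (hP i j)) k

lemma sum_joint [Fintype 𝒴] (hμinv : ∀ j, ∑ i, μ i * P i j = μ j) (j : 𝒳) :
    ∑ k, joint P μ g k j = μ j :=
  (sum_fiberSum g _).trans (hμinv j)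

lemma sum_fiberSum_joint [Fintype 𝒴] (hμinv : ∀ j, ∑ i, μ i * P i j = μ j) (l : 𝒴) :
    ∑ k, fiberSum g (joint P μ g k) l = fiberSum g μ l :=
  sum_comm.trans (congrArg (fiberSum g · l) (funext (sum_joint g hμinv)))

lemma joint_eq_zero (hμ : ∀ i, 0 ≤ μ i) {k : 𝒴} (hk : fiberSum g μ k = 0) (j : 𝒳) :
    joint P μ g k j = 0 :=
  fiberSum_mul_eq_zero g hμ hk _

end Joint

theorem IB_loss_le_redundancy_rate_difference_general {𝒳 𝒴 : Type*} [Fintype 𝒳] [Fintype 𝒴]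
    [DecidableEq 𝒴]
    (P : 𝒳 → 𝒳 → ℝ) (μ : 𝒳 → ℝ) (g : 𝒳 → 𝒴)
    (hPnn : ∀ i j, 0 ≤ P i j)
    (hμpos : ∀ i, 0 < μ i)
    (hμinv : ∀ j, ∑ i, μ i * P i j = μ j)
    (ν : 𝒴 → ℝ)
    (hν : ∀ k, ν k = ∑ i ∈ univ.filter (fun i => g i = k), μ i)
    (Q : 𝒴 → 𝒴 → ℝ)
    (hQ : ∀ k l, Q k l =
      (∑ i ∈ univ.filter (fun i => g i = k),
        ∑ j ∈ univ.filter (fun j => g j = l), μ i * P i j) / ν k)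
    -- S_{kj} = Pr(X_n = j | Y_{n-1} = k)
    (S : 𝒴 → 𝒳 → ℝ)
    (hS : ∀ k j, S k j = (∑ i ∈ univ.filter (fun i => g i = k), μ i * P i j) / ν k) :
    (-∑ k, ∑ j, ν k * S k j * Real.log (S k j))
      - (-∑ i, ∑ j, μ i * P i j * Real.log (P i j))
    ≤ (-∑ i, μ i * Real.log (μ i)) - (-∑ k, ν k * Real.log (ν k))
      + (-∑ k, ∑ l, ν k * Q k l * Real.log (Q k l))
      - (-∑ i, ∑ j, μ i * P i j * Real.log (P i j)) := by
  have hμ : ∀ i, 0 ≤ μ i := fun i => (hμpos i).le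
  obtain rfl : ν = fiberSum g μ := funext hν
  obtain rfl : S = fun k j => joint P μ g k j / fiberSum g μ k := funext₂ hS
  obtain rfl : Q = fun k l => fiberSum g (joint P μ g k) l / fiberSum g μ k :=
    funext₂ fun k l => (hQ k l).trans (congrArg (· / _) sum_comm)
  have hp := joint_nonneg g hPnn hμ
  -- `H(Y_{n-1} | X_n) ≤ H(Y_{n-1} | Y_n)`
  have key := condEntropy_le_condEntropy_fiberSum g hp
    fun j => (sum_joint g hμinv j).symm ▸ hμpos j
  simp only [condEntropy, sum_joint g hμinv, sum_fiberSum_joint g hμinv] at key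
  beta_reduce
  rw [sum_congr rfl fun k _ => sum_mul_div_mul_log_div _ fun hk => joint_eq_zero g hμ hk,
    sum_congr rfl fun k _ => sum_mul_div_mul_log_div (fiberSum g (joint P μ g k)) fun hk l =>
      sum_eq_zero fun j _ => joint_eq_zero g hμ hk j]
  simp only [sum_fiberSum, sum_sub_distrib]
  linarith

/-- The IB upper bound: `L_{X_n}(X_{n-1} → Y_{n-1}) = H(X_n|Y_{n-1}) − H(X_n|X_{n-1})`
is bounded above by the redundancy-rate difference
`R̄(X) − R̄(Y') = H(X) − H(Y') + H̄(Y') − H̄(X) = D̄(X‖X'^μ)`, where `Y'` is the optimal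
aggregation with transition matrix `Q` and invariant distribution `ν`. -/
theorem IB_loss_le_redundancy_rate_difference {𝒳 𝒴 : Type*} [Fintype 𝒳] [Fintype 𝒴]
    [DecidableEq 𝒴] [Nonempty 𝒳]
    (P : 𝒳 → 𝒳 → ℝ) (μ : 𝒳 → ℝ) (g : 𝒳 → 𝒴)
    (hPnn : ∀ i j, 0 ≤ P i j) (hProw : ∀ i, ∑ j, P i j = 1)
    (hμpos : ∀ i, 0 < μ i) (hμsum : ∑ i, μ i = 1)
    (hμinv : ∀ j, ∑ i, μ i * P i j = μ j)
    (R : 𝒳 → 𝒴 → ℝ)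
    (hR : ∀ i l, R i l = ∑ j ∈ univ.filter (fun j => g j = l), P i j)
    (ν : 𝒴 → ℝ)
    (hν : ∀ k, ν k = ∑ i ∈ univ.filter (fun i => g i = k), μ i)
    (Q : 𝒴 → 𝒴 → ℝ)
    (hQ : ∀ k l, Q k l =
      (∑ i ∈ univ.filter (fun i => g i = k),
        ∑ j ∈ univ.filter (fun j => g j = l), μ i * P i j) / ν k)
    -- S_{kj} = Pr(X_n = j | Y_{n-1} = k)
    (S : 𝒴 → 𝒳 → ℝ)
    (hS : ∀ k j, S k j = (∑ i ∈ univ.filter (fun i => g i = k), μ i * P i j) / ν k) :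
    (-∑ k, ∑ j, ν k * S k j * Real.log (S k j))
      - (-∑ i, ∑ j, μ i * P i j * Real.log (P i j))
    ≤ (-∑ i, μ i * Real.log (μ i)) - (-∑ k, ν k * Real.log (ν k))
      + (-∑ k, ∑ l, ν k * Q k l * Real.log (Q k l))
      - (-∑ i, ∑ j, μ i * P i j * Real.log (P i j)) :=
  IB_loss_le_redundancy_rate_difference_general P μ g hPnn hμpos hμinv ν hν Q hQ S hS
end
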